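/- Suppose moreover that a ≠ 0. Then right multiplication by θ = (a, b) defines a cochain complex 0 → D(A)⁰ → D(A)¹ → D(A)² → D(A)³ → 0 (each differential is ξ ↦ ξ·θ), and the dimension over 𝔽₂ of its cohomology at D(A)¹, namely dim ker(·θ : D(A)¹ → D(A)²) − dim im(·θ : D(A)⁰ → D(A)¹), is at least 1 − dim_{𝔽₂} A¹ + dim_{𝔽₂} A² (an inequality of integers). (This is the algebraic content of Proposition 2.6: for the mod-2 cohomology ring of the boundary manifold of a projective line arrangement, dim H¹(D(A),(a,b)) ≥ χ(U).) -/

import Mathlib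

/-! The degree-one cocycles contain `θ` together with every `(0, f)` where `f ∈ Ā²` vanishes on
`A¹ · a`, and `θ` is independent of these since `a ≠ 0`. As `dim Ā² = dim A²` and multiplication
by `a` kills `a ∈ A¹`, this yields at least `1 + dim A² - (dim A¹ - 1)` independent cocycles,
while the coboundaries are the image of `D(A)⁰ = A⁰`, of dimension at most one. -/

noncomputable section

/-- The action of `x : A` on a functional `f`: `(x · f) z = f (z * x)`. -/
def dAct {A : Type*} [CommRing A] [Algebra (ZMod 2) A]
    (x : A) (f : Module.Dual (ZMod 2) A) : Module.Dual (ZMod 2) A :=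
  f.comp (LinearMap.mulRight (ZMod 2) x)

/-- Multiplication on the double `D(A) = A × Ā`:
`(x, f) · (y, g) = (x y, x · g + y · f)`. -/
def dMul {A : Type*} [CommRing A] [Algebra (ZMod 2) A]
    (p q : A × Module.Dual (ZMod 2) A) : A × Module.Dual (ZMod 2) A :=
  (p.1 * q.1, dAct p.1 q.2 + dAct q.1 p.2)

/-- `Āᵏ`: the subspace of functionals vanishing on `Aⁱ` for all `i ≠ k`. -/
def dualGrade {A : Type*} [CommRing A] [Algebra (ZMod 2) A]
    (G : ℕ → Submodule (ZMod 2) A) (k : ℕ) :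
    Submodule (ZMod 2) (Module.Dual (ZMod 2) A) :=
  ⨅ (i : ℕ) (_ : i ≠ k) (x : A) (_ : x ∈ G i),
    LinearMap.ker (Module.Dual.eval (ZMod 2) A x)

/-- The grading `D(A)ᵏ = Aᵏ ⊕ Ā^{3-k}` of the double (for `k ≤ 3`). -/
def doubleGrade {A : Type*} [CommRing A] [Algebra (ZMod 2) A]
    (G : ℕ → Submodule (ZMod 2) A) (k : ℕ) :
    Submodule (ZMod 2) (A × Module.Dual (ZMod 2) A) :=
  (G k).prod (dualGrade G (3 - k))

/-- Right multiplication `ξ ↦ ξ · θ` on the double, as a linear map. -/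
def rMul {A : Type*} [CommRing A] [Algebra (ZMod 2) A]
    (θ : A × Module.Dual (ZMod 2) A) :
    (A × Module.Dual (ZMod 2) A) →ₗ[ZMod 2] (A × Module.Dual (ZMod 2) A) where
  toFun ξ := dMul ξ θ
  map_add' ξ η := by
    unfold dMul dAct
    refine Prod.ext (by simp [add_mul]) ?_
    ext z
    simp [mul_add, map_add]
    abel
  map_smul' c ξ := by
    unfold dMul dAct
    refine Prod.ext (by simp [smul_mul_assoc]) ?_
    ext z
    simp [mul_smul_comm, map_smul, smul_add]

open Module

theorem Submodule.finrank_le_finrank_inf_dualAnnihilator_add {K V : Type*} [Field K]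
    [AddCommGroup V] [Module K V] [FiniteDimensional K V] (U : Submodule K (Dual K V))
    (W : Submodule K V) :
    finrank K U ≤ finrank K ↥(U ⊓ W.dualAnnihilator) + finrank K W := by
  have hsup := Submodule.finrank_sup_add_finrank_inf_eq U W.dualAnnihilator
  have hann := Subspace.finrank_add_finrank_dualAnnihilator_eq W
  have hle := Submodule.finrank_le (U ⊔ W.dualAnnihilator)
  rw [Subspace.dual_finrank_eq] at hle
  omega

theorem Submodule.finrank_map_lt_finrank_of_mem_ker {K V W : Type*} [Field K] [AddCommGroup V]
    [Module K V] [AddCommGroup W] [Module K W] [FiniteDimensional K V] (f : V →ₗ[K] W)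
    (p : Submodule K V) {x : V} (hxp : x ∈ p) (hx : x ≠ 0) (hfx : f x = 0) :
    finrank K (p.map f) < finrank K p := by
  have hker : 1 ≤ finrank K (LinearMap.ker (f.domRestrict p)) := by
    have : Nontrivial (LinearMap.ker (f.domRestrict p)) :=
      ⟨⟨⟨⟨x, hxp⟩, hfx⟩, 0, fun h => hx (congrArg (fun y => (y.1 : V)) h)⟩⟩
    exact Module.finrank_pos
  have := LinearMap.finrank_range_add_finrank_ker (f.domRestrict p)
  rw [LinearMap.range_domRestrict] at this
  omega

section Double

variable {A : Type*} [CommRing A] [Algebra (ZMod 2) A] {G : ℕ → Submodule (ZMod 2) A}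

theorem gradedMul_of_mul_mem_of_mul_eq_zero
    (hmul : ∀ i j, i + j ≤ 2 → ∀ x ∈ G i, ∀ y ∈ G j, x * y ∈ G (i + j))
    (hmulzero : ∀ i j, 2 < i + j → ∀ x ∈ G i, ∀ y ∈ G j, x * y = 0) :
    SetLike.GradedMul G where
  mul_mem i j x y hx hy := by
    rcases le_or_gt (i + j) 2 with h | h
    · exact hmul i j h x hx y hy
    · rw [hmulzero i j h x hx y hy]
      exact zero_mem _

theorem mem_dualGrade {f : Dual (ZMod 2) A} {k : ℕ} :
    f ∈ dualGrade G k ↔ ∀ i ≠ k, ∀ x ∈ G i, f x = 0 := by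
  simp [dualGrade, Submodule.mem_iInf]

theorem dualGrade_eq_dualAnnihilator (k : ℕ) :
    dualGrade G k = (⨆ (i) (_ : i ≠ k), G i).dualAnnihilator := by
  ext f
  simp only [mem_dualGrade, Submodule.dualAnnihilator_iSup_eq, Submodule.mem_iInf,
    Submodule.mem_dualAnnihilator]

theorem finrank_dualGrade [Module.Finite (ZMod 2) A] (hG : DirectSum.IsInternal G) (k : ℕ) :
    finrank (ZMod 2) (dualGrade G k) = finrank (ZMod 2) (G k) := by
  have hcompl : IsCompl (G k) (⨆ (i) (_ : i ≠ k), G i) :=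
    ⟨hG.submodule_iSupIndep k, codisjoint_iff.mpr <| by
      rw [← iSup_split_single G k, hG.submodule_iSup_eq_top]⟩
  have := Submodule.finrank_add_eq_of_isCompl hcompl
  have := Subspace.finrank_add_finrank_dualAnnihilator_eq (⨆ (i) (_ : i ≠ k), G i)
  rw [dualGrade_eq_dualAnnihilator]
  omega

theorem dual_eq_zero_of_forall_mem (hG : ⨆ i, G i = ⊤) {f : Dual (ZMod 2) A}
    (hf : ∀ i, ∀ x ∈ G i, f x = 0) : f = 0 := by
  rw [← LinearMap.ker_eq_top, eq_top_iff, ← hG, iSup_le_iff]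
  exact fun i x hx => hf i x hx

theorem dualGrade_eq_bot (hG : ⨆ i, G i = ⊤) {k : ℕ} (hk : G k = ⊥) : dualGrade G k = ⊥ := by
  refine (Submodule.eq_bot_iff _).mpr fun f hf => dual_eq_zero_of_forall_mem hG fun i x hx => ?_
  rcases eq_or_ne i k with rfl | hi
  · rw [hk, Submodule.mem_bot] at hx
    rw [hx, map_zero]
  · exact mem_dualGrade.mp hf i hi x hx

@[simp]
theorem dAct_apply (x : A) (f : Dual (ZMod 2) A) (z : A) : dAct x f z = f (z * x) := rfl

@[simp]
theorem rMul_apply (θ ξ : A × Dual (ZMod 2) A) : rMul θ ξ = dMul ξ θ := rfl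

theorem dAct_mem_dualGrade [SetLike.GradedMul G] {m n : ℕ} (hmn : m ≤ n) {x : A} (hx : x ∈ G m)
    {f : Dual (ZMod 2) A} (hf : f ∈ dualGrade G n) : dAct x f ∈ dualGrade G (n - m) :=
  mem_dualGrade.mpr fun i hi z hz =>
    mem_dualGrade.mp hf (i + m) (by omega) _ (SetLike.GradedMul.mul_mem hz hx)

theorem dMul_mem_doubleGrade [SetLike.GradedMul G] {k l : ℕ} (hkl : k + l ≤ 3)
    {ξ η : A × Dual (ZMod 2) A} (hξ : ξ ∈ doubleGrade G k) (hη : η ∈ doubleGrade G l) :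
    dMul ξ η ∈ doubleGrade G (k + l) := by
  obtain ⟨hξ₁, hξ₂⟩ := hξ
  obtain ⟨hη₁, hη₂⟩ := hη
  refine ⟨SetLike.GradedMul.mul_mem hξ₁ hη₁, Submodule.add_mem _ ?_ ?_⟩
  · have := dAct_mem_dualGrade (show k ≤ 3 - l by omega) hξ₁ hη₂
    rwa [show 3 - l - k = 3 - (k + l) by omega] at this
  · have := dAct_mem_dualGrade (show l ≤ 3 - k by omega) hη₁ hξ₂
    rwa [show 3 - k - l = 3 - (k + l) by omega] at this

theorem rMul_rMul_self {a : A} (ha : a * a = 0) (b : Dual (ZMod 2) A)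
    (ξ : A × Dual (ZMod 2) A) : rMul (a, b) (rMul (a, b) ξ) = 0 := by
  refine Prod.ext (by simp [dMul, mul_assoc, ha]) (LinearMap.ext fun z => ?_)
  simp only [rMul_apply, dMul, LinearMap.add_apply, dAct_apply, Prod.snd_zero,
    LinearMap.zero_apply]
  rw [show z * (ξ.1 * a) = z * a * ξ.1 by ring, mul_assoc z a a, ha, mul_zero, map_zero,
    add_zero, CharTwo.add_self_eq_zero]

theorem rMul_self {a : A} (ha : a * a = 0) (b : Dual (ZMod 2) A) : rMul (a, b) (a, b) = 0 :=
  Prod.ext ha (LinearMap.ext fun _ => CharTwo.add_self_eq_zero _)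

theorem dAct_eq_zero_of_mem_dualAnnihilator [SetLike.GradedMul G] (hG : ⨆ i, G i = ⊤) {a : A}
    (ha : a ∈ G 1) {f : Dual (ZMod 2) A} (hf : f ∈ dualGrade G 2)
    (hfa : f ∈ ((G 1).map (LinearMap.mulRight (ZMod 2) a)).dualAnnihilator) : dAct a f = 0 := by
  refine dual_eq_zero_of_forall_mem hG fun i z hz => ?_
  rw [dAct_apply]
  rcases eq_or_ne i 1 with rfl | hi
  · exact (Submodule.mem_dualAnnihilator f).mp hfa _ ⟨z, hz, rfl⟩
  · exact mem_dualGrade.mp hf (i + 1) (by omega) _ (SetLike.GradedMul.mul_mem hz ha)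

theorem one_add_finrank_le_finrank_cocycles [Module.Finite (ZMod 2) A] [SetLike.GradedMul G]
    (hG : ⨆ i, G i = ⊤) {a : A} (ha : a ∈ G 1) (ha2 : a * a = 0) (hane : a ≠ 0)
    {b : Dual (ZMod 2) A} (hb : b ∈ dualGrade G 2) :
    1 + finrank (ZMod 2) ↥(dualGrade G 2 ⊓
        ((G 1).map (LinearMap.mulRight (ZMod 2) a)).dualAnnihilator) ≤
      finrank (ZMod 2) ↥(doubleGrade G 1 ⊓ LinearMap.ker (rMul (a, b))) := by
  set W := dualGrade G 2 ⊓ ((G 1).map (LinearMap.mulRight (ZMod 2) a)).dualAnnihilator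
  set S := W.map (LinearMap.inr (ZMod 2) A (Dual (ZMod 2) A))
  have hS : finrank (ZMod 2) S = finrank (ZMod 2) W :=
    (Submodule.equivMapOfInjective _ LinearMap.inr_injective W).finrank_eq.symm
  have hθS : (a, b) ∉ S := fun ⟨_, _, h⟩ => hane (congrArg Prod.fst h).symm
  have hle : S ⊔ (ZMod 2 ∙ (a, b)) ≤ doubleGrade G 1 ⊓ LinearMap.ker (rMul (a, b)) := by
    rw [sup_le_iff, Submodule.span_singleton_le_iff_mem]
    refine ⟨?_, ⟨ha, hb⟩, rMul_self ha2 b⟩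
    rintro _ ⟨f, hf, rfl⟩
    refine ⟨⟨zero_mem _, hf.1⟩, Prod.ext (zero_mul a) ?_⟩
    simpa [dMul, dAct] using dAct_eq_zero_of_mem_dualAnnihilator hG ha hf.1 hf.2
  have := Submodule.finrank_mono hle
  rw [Submodule.finrank_sup_span_singleton hθS] at this
  omega

theorem finrank_map_rMul_doubleGrade_zero_le_one [Module.Finite (ZMod 2) A]
    (hG : ⨆ i, G i = ⊤) (hG3 : G 3 = ⊥) (hG0 : G 0 = Submodule.span (ZMod 2) {1})
    (θ : A × Dual (ZMod 2) A) :
    finrank (ZMod 2) ((doubleGrade G 0).map (rMul θ)) ≤ 1 := by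
  have h : doubleGrade G 0 = (G 0).map (LinearMap.inl (ZMod 2) A (Dual (ZMod 2) A)) := by
    rw [doubleGrade, show 3 - 0 = 3 from rfl, dualGrade_eq_bot hG hG3, Submodule.map_inl]
  rw [h, ← Submodule.map_comp]
  calc finrank (ZMod 2) ((G 0).map (rMul θ ∘ₗ LinearMap.inl _ _ _))
      ≤ finrank (ZMod 2) (G 0) := Submodule.finrank_map_le _ _
    _ ≤ 1 := by
      rw [hG0]
      simpa using finrank_span_le_card (R := ZMod 2) ({1} : Set A)

end Double

theorem stmt0_general {A : Type*} [CommRing A] [Algebra (ZMod 2) A]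
    [Module.Finite (ZMod 2) A]
    (G : ℕ → Submodule (ZMod 2) A)
    (hinternal : DirectSum.IsInternal G)
    (hbot : ∀ i, 2 < i → G i = ⊥)
    (hG0 : G 0 = Submodule.span (ZMod 2) {1})
    (hmul : ∀ i j, i + j ≤ 2 → ∀ x ∈ G i, ∀ y ∈ G j, x * y ∈ G (i + j))
    (hmulzero : ∀ i j, 2 < i + j → ∀ x ∈ G i, ∀ y ∈ G j, x * y = 0)
    (a : A) (ha : a ∈ G 1) (ha2 : a * a = 0) (hane : a ≠ 0)
    (b : Module.Dual (ZMod 2) A) (hb : b ∈ dualGrade G 2) :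
    (∀ k ≤ 2, ∀ ξ ∈ doubleGrade G k, rMul (a, b) ξ ∈ doubleGrade G (k + 1)) ∧
    (∀ ξ : A × Module.Dual (ZMod 2) A, rMul (a, b) (rMul (a, b) ξ) = 0) ∧
    (Module.finrank (ZMod 2)
        ↥(doubleGrade G 1 ⊓ LinearMap.ker (rMul (a, b))) : ℤ)
      - Module.finrank (ZMod 2) ↥((doubleGrade G 0).map (rMul (a, b)))
      ≥ 1 - Module.finrank (ZMod 2) ↥(G 1) + Module.finrank (ZMod 2) ↥(G 2) := by
  have := gradedMul_of_mul_mem_of_mul_eq_zero hmul hmulzero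
  have hsup := hinternal.submodule_iSup_eq_top
  refine ⟨fun k hk ξ hξ => dMul_mem_doubleGrade (by omega) hξ ⟨ha, hb⟩,
    rMul_rMul_self ha2 b, ?_⟩
  have hcocycles := one_add_finrank_le_finrank_cocycles hsup ha ha2 hane hb
  have hann := Submodule.finrank_le_finrank_inf_dualAnnihilator_add (dualGrade G 2)
    ((G 1).map (LinearMap.mulRight (ZMod 2) a))
  have hdual := finrank_dualGrade hinternal 2
  have himage := Submodule.finrank_map_lt_finrank_of_mem_ker (LinearMap.mulRight (ZMod 2) a)
    (G 1) ha hane ha2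
  have hcoboundaries :=
    finrank_map_rMul_doubleGrade_zero_le_one hsup (hbot 3 (by norm_num)) hG0 (a, b)
  omega

/-- Proposition 2.6 (algebraic content): if `a ≠ 0`, then right multiplication by
`θ = (a, b)` defines a cochain complex `0 → D(A)⁰ → D(A)¹ → D(A)² → D(A)³ → 0`,
and the dimension of its cohomology at `D(A)¹` is at least
`1 - dim A¹ + dim A²  (= χ(U))`. -/
theorem stmt0 {A : Type*} [CommRing A] [Algebra (ZMod 2) A] [Nontrivial A]
    [Module.Finite (ZMod 2) A]
    (G : ℕ → Submodule (ZMod 2) A)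
    (hinternal : DirectSum.IsInternal G)
    (hbot : ∀ i, 2 < i → G i = ⊥)
    (hG0 : G 0 = Submodule.span (ZMod 2) {1})
    (hmul : ∀ i j, i + j ≤ 2 → ∀ x ∈ G i, ∀ y ∈ G j, x * y ∈ G (i + j))
    (hmulzero : ∀ i j, 2 < i + j → ∀ x ∈ G i, ∀ y ∈ G j, x * y = 0)
    (a : A) (ha : a ∈ G 1) (ha2 : a * a = 0) (hane : a ≠ 0)
    (b : Module.Dual (ZMod 2) A) (hb : b ∈ dualGrade G 2) :
    (∀ k ≤ 2, ∀ ξ ∈ doubleGrade G k, rMul (a, b) ξ ∈ doubleGrade G (k + 1)) ∧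
    (∀ ξ : A × Module.Dual (ZMod 2) A, rMul (a, b) (rMul (a, b) ξ) = 0) ∧
    (Module.finrank (ZMod 2)
        ↥(doubleGrade G 1 ⊓ LinearMap.ker (rMul (a, b))) : ℤ)
      - Module.finrank (ZMod 2) ↥((doubleGrade G 0).map (rMul (a, b)))
      ≥ 1 - Module.finrank (ZMod 2) ↥(G 1) + Module.finrank (ZMod 2) ↥(G 2) :=
  stmt0_general G hinternal hbot hG0 hmul hmulzero a ha ha2 hane b hb
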